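/- arXiv:2107.12636 — 2 statements merged into one kernel-verified Lean document; each statement's English description precedes it below -/
import Mathlib

section
/- Let S and T be distributions over X with a common labeling function f, H a hypothesis class, h* ∈ H a minimizer of R_S(h) + R_T(h) with value λ, and d_{HΔH}(S,T) the HΔH-divergence. Then for every h ∈ H, R_T(h) ≤ R_S(h) + (1/2) d_{HΔH}(S,T) + λ. -/
/-!
Disagreement `Pr[g ≠ g']` satisfies the triangle inequality, so the risk of `h` on `T` is at most
its disagreement with `h*` on `T` plus `R_T(h*)`. Both `h` and `h*` lie in `H`, so moving that
disagreement from `T` to `S` costs at most `½ d_{HΔH}(S,T)`, and on `S` it is at most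
`R_S(h) + R_S(h*)` by the triangle inequality again.
-/

open MeasureTheory

/-- The 0–1 risk of `h` on domain `D` with respect to the labeling function `f`. -/
noncomputable def err {X : Type*} [MeasurableSpace X]
    (D : Measure X) (f h : X → Bool) : ℝ :=
  (D {x | h x ≠ f x}).toReal

/-- The `HΔH`-divergence
`d_{HΔH}(S,T) = 2 sup_{h,h' ∈ H} |Pr_S[h ≠ h'] − Pr_T[h ≠ h']|`. -/
noncomputable def dHdH {X : Type*} [MeasurableSpace X]
    (S T : Measure X) (H : Set (X → Bool)) : ℝ :=
  2 * sSup {r : ℝ | ∃ h ∈ H, ∃ h' ∈ H,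
    r = |(S {x | h x ≠ h' x}).toReal - (T {x | h x ≠ h' x}).toReal|}

section Disagreement

variable {X β : Type*} [MeasurableSpace X]

lemma measureReal_setOf_ne_le_add (μ : Measure X) [IsFiniteMeasure μ] (a b c : X → β) :
    μ.real {x | a x ≠ c x} ≤ μ.real {x | a x ≠ b x} + μ.real {x | b x ≠ c x} := by
  have hsub : {x | a x ≠ c x} ⊆ {x | a x ≠ b x} ∪ {x | b x ≠ c x} := by
    intro x hac
    by_contra! hab_bc
    simp_all
  exact (measureReal_mono hsub).trans (measureReal_union_le _ _)

lemma abs_measureReal_sub_measureReal_le_one (μ ν : Measure X) [IsProbabilityMeasure μ]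
    [IsProbabilityMeasure ν] (s : Set X) : |μ.real s - ν.real s| ≤ 1 :=
  abs_sub_le_of_nonneg_of_le measureReal_nonneg measureReal_le_one measureReal_nonneg
    measureReal_le_one

end Disagreement

lemma measureReal_setOf_ne_le_add_dHdH {X : Type*} [MeasurableSpace X] (S T : Measure X)
    [IsProbabilityMeasure S] [IsProbabilityMeasure T] {H : Set (X → Bool)} {h h' : X → Bool}
    (hh : h ∈ H) (hh' : h' ∈ H) :
    T.real {x | h x ≠ h' x} ≤ S.real {x | h x ≠ h' x} + (1 / 2) * dHdH S T H := by
  have hbdd : BddAbove {r : ℝ | ∃ h ∈ H, ∃ h' ∈ H,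
      r = |(S {x | h x ≠ h' x}).toReal - (T {x | h x ≠ h' x}).toReal|} := by
    refine ⟨1, ?_⟩
    rintro r ⟨g, -, g', -, rfl⟩
    exact abs_measureReal_sub_measureReal_le_one S T _
  have hgap := (abs_sub_le_iff.mp (le_csSup hbdd ⟨h, hh, h', hh', rfl⟩)).2
  simp only [dHdH, Measure.real] at hgap ⊢
  linarith

theorem stmt11_general {X : Type*} [MeasurableSpace X] (S T : Measure X)
    [IsProbabilityMeasure S] [IsProbabilityMeasure T]
    (H : Set (X → Bool))
    (f : X → Bool)
    (hstar : X → Bool) (hmem : hstar ∈ H)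
    (lam : ℝ) (hlam : lam = err S f hstar + err T f hstar) :
    ∀ h ∈ H, err T f h ≤ err S f h + (1 / 2) * dHdH S T H + lam := by
  intro h hh
  have hT := measureReal_setOf_ne_le_add T h hstar f
  have hS := measureReal_setOf_ne_le_add S h f hstar
  have hgap := measureReal_setOf_ne_le_add_dHdH S T hh hmem
  rw [show {x | f x ≠ hstar x} = {x | hstar x ≠ f x} by simp_rw [ne_comm]] at hS
  simp only [err, hlam, ← measureReal_def] at *
  linarith

/-- The Ben-David et al. domain adaptation bound: for every `h ∈ H`,
`R_T(h) ≤ R_S(h) + ½ d_{HΔH}(S,T) + λ`, where `λ = R_S(h*) + R_T(h*)` is attained by a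
minimizer `h* ∈ H` of `R_S + R_T`. -/
theorem stmt11 {X : Type*} [MeasurableSpace X] (S T : Measure X)
    [IsProbabilityMeasure S] [IsProbabilityMeasure T]
    (H : Set (X → Bool)) (hH : ∀ h ∈ H, Measurable h)
    (f : X → Bool) (hf : Measurable f)
    (hstar : X → Bool) (hmem : hstar ∈ H)
    (hmin : ∀ h ∈ H, err S f hstar + err T f hstar ≤ err S f h + err T f h)
    (lam : ℝ) (hlam : lam = err S f hstar + err T f hstar) :
    ∀ h ∈ H, err T f h ≤ err S f h + (1 / 2) * dHdH S T H + lam :=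
  stmt11_general S T H f hstar hmem lam hlam
end

section
/- Let L ≥ 1 and c₁, …, c_L, ε > 0. If per-layer log covering numbers satisfy log Nᵢ ≤ cᵢ/εᵢ² for tolerances εᵢ > 0 with ∑ᵢ εᵢ ≤ ε, then choosing εᵢ proportional to cᵢ^{1/3}, i.e., εᵢ = ε cᵢ^{1/3} / ∑ⱼ cⱼ^{1/3}, gives ∑ᵢ log Nᵢ ≤ (1/ε²) (∑_{i=1}^{L} cᵢ^{1/3})³. -/
/-! With `εᵢ = ε aᵢ / S`, where `aᵢ = cᵢ^{1/3}` and `S = ∑ⱼ aⱼ`, each bound `cᵢ / εᵢ²` equals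
`aᵢ³ S² / (ε² aᵢ²) = aᵢ S² / ε²`, and summing over the layers gives `S³ / ε²`. -/

theorem div_sq_of_cube_eq {K : Type*} [Field K] {a c : K} (hac : a ^ 3 = c) (ε S : K) :
    c / (ε * a / S) ^ 2 = a * S ^ 2 / ε ^ 2 := by
  rcases eq_or_ne a 0 with rfl | ha
  · simp [← hac]
  rw [← hac, div_pow, mul_pow, div_div_eq_mul_div,
    show a ^ 3 * S ^ 2 = a * S ^ 2 * a ^ 2 by ring, mul_div_mul_right _ _ (pow_ne_zero 2 ha)]

theorem sum_div_sq_proportional_of_cube_eq {ι K : Type*} [Field K] (s : Finset ι) {a c : ι → K}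
    (hac : ∀ i ∈ s, a i ^ 3 = c i) (ε : K) :
    ∑ i ∈ s, c i / (ε * a i / ∑ j ∈ s, a j) ^ 2 = (1 / ε ^ 2) * (∑ i ∈ s, a i) ^ 3 := by
  rw [Finset.sum_congr rfl fun i hi => div_sq_of_cube_eq (hac i hi) ε _,
    ← Finset.sum_div, ← Finset.sum_mul]
  ring

theorem Real.rpow_one_div_three_pow_three {x : ℝ} (hx : 0 ≤ x) : (x ^ ((1 : ℝ) / 3)) ^ 3 = x := by
  simpa using Real.rpow_inv_natCast_pow hx (n := 3) three_ne_zero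

theorem stmt18_general (L : ℕ) (c : ℕ → ℝ) (hc : ∀ i, 0 < c i)
    (ε : ℝ) (logN eps : ℕ → ℝ)
    (heps : ∀ i, eps i = ε * c i ^ ((1 : ℝ) / 3) / ∑ j ∈ Finset.Icc 1 L, c j ^ ((1 : ℝ) / 3))
    (hN : ∀ i ∈ Finset.Icc 1 L, logN i ≤ c i / (eps i) ^ 2) :
    ∑ i ∈ Finset.Icc 1 L, logN i ≤
      (1 / ε ^ 2) * (∑ i ∈ Finset.Icc 1 L, c i ^ ((1 : ℝ) / 3)) ^ 3 := by
  calc ∑ i ∈ Finset.Icc 1 L, logN i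
      ≤ ∑ i ∈ Finset.Icc 1 L, c i / (eps i) ^ 2 := Finset.sum_le_sum hN
    _ = (1 / ε ^ 2) * (∑ i ∈ Finset.Icc 1 L, c i ^ ((1 : ℝ) / 3)) ^ 3 := by
      simp only [heps]
      exact sum_div_sq_proportional_of_cube_eq _
        (fun i _ => Real.rpow_one_div_three_pow_three (hc i).le) ε

/-- Optimal tolerance allocation: if per-layer log covering numbers satisfy
`log Nᵢ ≤ cᵢ / εᵢ²` with `εᵢ = ε cᵢ^{1/3} / ∑ⱼ cⱼ^{1/3}` (so that `∑ᵢ εᵢ ≤ ε`), then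
`∑ᵢ log Nᵢ ≤ (1/ε²) (∑ᵢ cᵢ^{1/3})³`. -/
theorem stmt18 (L : ℕ) (hL : 1 ≤ L) (c : ℕ → ℝ) (hc : ∀ i, 0 < c i)
    (ε : ℝ) (hε : 0 < ε) (logN eps : ℕ → ℝ)
    (heps : ∀ i, eps i = ε * c i ^ ((1 : ℝ) / 3) / ∑ j ∈ Finset.Icc 1 L, c j ^ ((1 : ℝ) / 3))
    (hepspos : ∀ i ∈ Finset.Icc 1 L, 0 < eps i)
    (hsum : ∑ i ∈ Finset.Icc 1 L, eps i ≤ ε)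
    (hN : ∀ i ∈ Finset.Icc 1 L, logN i ≤ c i / (eps i) ^ 2) :
    ∑ i ∈ Finset.Icc 1 L, logN i ≤
      (1 / ε ^ 2) * (∑ i ∈ Finset.Icc 1 L, c i ^ ((1 : ℝ) / 3)) ^ 3 :=
  stmt18_general L c hc ε logN eps heps hN
end
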